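/- Let n ≥ 2 and let S = L_{B₂}(n). Then in the free abelian group ℤ[BP] on the set of bipartitions, π_S( Σ_{k=0}^{n−2} (−1)^{k+n} A( 2^k1^{n−k−1}.(n−k−2) ) ) = (−1)^n 1^{n−1}.(n−1) + 2^{n−1}.∅. -/

import Mathlib

open scoped Classical

noncomputable section

/-- A partition: an antitone, eventually zero sequence of natural numbers.
`parts k` is the `(k+1)`-st part `λ_{k+1}`. -/
structure SeqPartition where
  parts : ℕ → ℕ
  antitone' : Antitone parts
  exists_zero : ∃ N, parts N = 0

namespace SeqPartition

lemma sorted_getD_antitone {l : List ℕ} (h : l.Pairwise (· ≥ ·)) :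
    Antitone (fun k => l.getD k 0) := by
  intro i j hij
  simp only
  rcases lt_or_ge j l.length with hj | hj
  · have hi : i < l.length := lt_of_le_of_lt hij hj
    rw [List.getD_eq_getElem l 0 hj, List.getD_eq_getElem l 0 hi]
    rcases eq_or_lt_of_le hij with rfl | hlt
    · exact le_rfl
    · exact List.pairwise_iff_getElem.mp h i j hi hj hlt
  · rw [List.getD_eq_default l 0 hj]
    exact Nat.zero_le _

/-- The partition whose multiset of (nonzero) parts is the multiset of nonzero
elements of `m`. -/
def ofMul (m : Multiset ℕ) : SeqPartition where
  parts := fun k => ((m.sort (· ≤ ·)).reverse).getD k 0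
  antitone' := by
    apply sorted_getD_antitone
    rw [List.pairwise_reverse]
    exact Multiset.pairwise_sort (r := (· ≤ ·)) (s := m)
  exists_zero := ⟨((m.sort (· ≤ ·)).reverse).length, List.getD_eq_default _ _ le_rfl⟩

/-- The size `|λ|` of a partition: the sum of its parts. -/
def size (p : SeqPartition) : ℕ := ∑ i ∈ Finset.range (Nat.find p.exists_zero), p.parts i

lemma finite_gt (p : SeqPartition) (k : ℕ) : {i : ℕ | k < p.parts i}.Finite := by
  obtain ⟨N, hN⟩ := p.exists_zero
  apply (Set.finite_Iio N).subset
  intro i hi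
  simp only [Set.mem_setOf_eq] at hi
  by_contra hc
  simp only [Set.mem_Iio, not_lt] at hc
  have := p.antitone' hc
  omega

/-- The conjugate (transpose) partition. -/
def conj (p : SeqPartition) : SeqPartition where
  parts := fun k => {i : ℕ | k < p.parts i}.ncard
  antitone' := fun a b hab =>
    Set.ncard_le_ncard (fun i hi => lt_of_le_of_lt hab hi) (p.finite_gt a)
  exists_zero := by
    refine ⟨p.parts 0, ?_⟩
    have h : {i : ℕ | p.parts 0 < p.parts i} = ∅ := by
      ext i
      simp only [Set.mem_setOf_eq, Set.mem_empty_iff_false, iff_false, not_lt]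
      exact p.antitone' (Nat.zero_le i)
    try simp only []
    rw [h, Set.ncard_empty]

/-- The 180°-rotation of the complement of `p` inside the rectangle with
`rows` rows of length `c`: the partition `(c - p_rows, c - p_{rows-1}, …, c - p₁)`. -/
def rotCompl (c rows : ℕ) (p : SeqPartition) : SeqPartition where
  parts := fun k => if k < rows then c - p.parts (rows - 1 - k) else 0
  antitone' := by
    intro a b hab
    by_cases hb : b < rows
    · have ha : a < rows := lt_of_le_of_lt hab hb
      simp only [if_pos hb, if_pos ha]
      exact Nat.sub_le_sub_left (p.antitone' (by omega)) c
    · simp only [if_neg hb]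
      exact Nat.zero_le _
  exists_zero := ⟨rows, by simp⟩

end SeqPartition

/-- A bipartition: a pair of partitions. -/
abbrev Bipartition := SeqPartition × SeqPartition

/-- The size of a bipartition. -/
def Bipartition.size (l : Bipartition) : ℕ := l.1.size + l.2.size

/-- The bipartition whose components have parts the multisets `a` and `b`. -/
def bip (a b : Multiset ℕ) : Bipartition := (SeqPartition.ofMul a, SeqPartition.ofMul b)

/-- The multiset of parts of the partition `a 1^b` (one part `a`, then `b` parts `1`). -/
def hook (a b : ℕ) : Multiset ℕ := a ::ₘ Multiset.replicate b 1

/-- The charged β-set of a partition, as a sequence: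
`betaSet p s i = λ_{i+1} + s - (i+1) + 1`. -/
def betaSet (p : SeqPartition) (s : ℤ) (i : ℕ) : ℤ := (p.parts i : ℤ) + s - i

/-- The charged symbol of a bipartition with charge `σ`, as a pair of subsets of `ℤ`. -/
def symbolOf (l : Bipartition) (σ : ℤ × ℤ) : Set ℤ × Set ℤ :=
  (Set.range (betaSet l.1 σ.1), Set.range (betaSet l.2 σ.2))

/-- The charge `σ_t`. -/
def sigmaT (t : ℕ) : ℤ × ℤ :=
  if Even t then ((t : ℤ), -1 - (t : ℤ)) else (-1 - (t : ℤ), (t : ℤ))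

/-- The trivial symbol `({0,-1,-2,…},{-1,-2,-3,…})`, the symbol of the empty
bipartition with charge `σ₀ = (0,-1)`. -/
def trivialSymbol : Set ℤ × Set ℤ := ({z : ℤ | z ≤ 0}, {z : ℤ | z ≤ -1})

/-- Removing one `n`-co-hook from the symbol `Λ`, yielding `Λ'`: remove `x+n` from one
row, adjoin `x` to the other row, and exchange the two rows. -/
def CohookStep (n : ℕ) (Λ Λ' : Set ℤ × Set ℤ) : Prop :=
  (∃ x : ℤ, x + n ∈ Λ.1 ∧ x ∉ Λ.2 ∧ Λ' = (Λ.2 ∪ {x}, Λ.1 \ {x + n})) ∨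
  (∃ x : ℤ, x + n ∈ Λ.2 ∧ x ∉ Λ.1 ∧ Λ' = (Λ.2 \ {x + n}, Λ.1 ∪ {x}))

/-- `C` is the `n`-co-core of `Λ`: it is obtained from `Λ` by recursively removing
`n`-co-hooks, and no further `n`-co-hook can be removed. -/
def IsCocore (n : ℕ) (Λ C : Set ℤ × Set ℤ) : Prop :=
  Relation.ReflTransGen (CohookStep n) Λ C ∧ ∀ C', ¬ CohookStep n C C'

/-- Number of entries of the charged β-set of `p` that are `≥ α` (with multiplicity). -/
def betaCountGE (p : SeqPartition) (s α : ℤ) : ℕ := Nat.card {i : ℕ // α ≤ betaSet p s i}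

/-- Number of entries `≥ α`, with multiplicity, of the multiset union of the two rows
of the symbol of `l` with charge `σ`. -/
def symCountGE (l : Bipartition) (σ : ℤ × ℤ) (α : ℤ) : ℕ :=
  betaCountGE l.1 σ.1 α + betaCountGE l.2 σ.2 α

/-- The composition `ϖ_Λ` of the symbol of `l` with charge `σ`: `comp l σ k` is the
`(k+1)`-st largest entry (with multiplicity) of the multiset union of the two rows. -/
def comp (l : Bipartition) (σ : ℤ × ℤ) (k : ℕ) : ℤ :=
  sSup {z : ℤ | k + 1 ≤ symCountGE l σ z}

/-- All partial sums of the composition of the symbol `(l,σ)` are bounded by those of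
`(m,τ)`. -/
def DomLE (l : Bipartition) (σ : ℤ × ℤ) (m : Bipartition) (τ : ℤ × ℤ) : Prop :=
  ∀ j : ℕ, ∑ k ∈ Finset.range j, comp l σ k ≤ ∑ k ∈ Finset.range j, comp m τ k

/-- Strict dominance `Λ ⊲ Λ'` of symbols: the compositions differ and all partial sums
of the first are bounded by those of the second. -/
def DomLT (l : Bipartition) (σ : ℤ × ℤ) (m : Bipartition) (τ : ℤ × ℤ) : Prop :=
  comp l σ ≠ comp m τ ∧ DomLE l σ m τ

/-- A box `(x, y, j)` (0-indexed row `x`, 0-indexed column `y`, component `j`: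
`j = 0` is the first component, `j = 1` the second). -/
abbrev Box := ℕ × ℕ × Fin 2

/-- The component of a bipartition selected by `j : Fin 2`. -/
def Bipartition.partsOf (l : Bipartition) (j : Fin 2) : SeqPartition := if j = 0 then l.1 else l.2

/-- Membership of a box in the Young diagram of a bipartition. -/
def MemY (l : Bipartition) (b : Box) : Prop := b.2.1 < (l.partsOf b.2.2).parts b.1

/-- The entry of the charge `σ` corresponding to component `j`. -/
def chargeOf (σ : ℤ × ℤ) (j : Fin 2) : ℤ := if j = 0 then σ.1 else σ.2

/-- The charged content `co^σ(b) = y - x + σ_j` of a box. -/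
def content (σ : ℤ × ℤ) (b : Box) : ℤ := (b.2.1 : ℤ) - (b.1 : ℤ) + chargeOf σ b.2.2

/-- `j(b) ∈ {1,2}`: the component of a box, numbered 1 or 2. -/
def jval (b : Box) : ℕ := (b.2.2 : ℕ) + 1

/-- The counting function of the Dunkl–Griffeth order. -/
def dgCount (l : Bipartition) (s : ℤ × ℤ) (d : ℕ) (α : ℝ) (j : ℕ) : ℕ :=
  Nat.card {b : Box // MemY l b ∧
    (α < (content s b : ℝ) - (jval b : ℝ) * (d : ℝ) / 2 ∨
      ((content s b : ℝ) - (jval b : ℝ) * (d : ℝ) / 2 = α ∧ jval b ≤ j))}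

/-- The Dunkl–Griffeth order `λ ⪯_s μ` (with respect to `d`). -/
def DGLE (l m : Bipartition) (s : ℤ × ℤ) (d : ℕ) : Prop :=
  ∀ (α : ℝ), ∀ j ∈ ({1, 2} : Set ℕ), dgCount l s d α j ≤ dgCount m s d α j

/-- A box of the extended Young diagram: rows are infinite to the left, so the column
coordinate is an integer.  `(x, y, j)` is the box in (0-indexed) row `x`, with integer
column coordinate `y` (`y = 0` is the first column), in component `j`. -/
abbrev ExtBox := ℕ × ℤ × Fin 2

/-- Membership in the extended Young diagram of a bipartition. -/
def MemExtY (l : Bipartition) (b : ExtBox) : Prop :=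
  b.2.1 < ((l.partsOf b.2.2).parts b.1 : ℤ)

/-- The charged content of an extended box. -/
def contentExt (σ : ℤ × ℤ) (b : ExtBox) : ℤ := b.2.1 - (b.1 : ℤ) + chargeOf σ b.2.2

/-- `b` is a removable box of the bipartition `l`. -/
def Removable (l : Bipartition) (b : Box) : Prop :=
  (l.partsOf b.2.2).parts b.1 = b.2.1 + 1 ∧ (l.partsOf b.2.2).parts (b.1 + 1) ≤ b.2.1

/-- `b` is an addable box of the bipartition `l`. -/
def Addable (l : Bipartition) (b : Box) : Prop :=
  (l.partsOf b.2.2).parts b.1 = b.2.1 ∧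
    (b.1 = 0 ∨ b.2.1 + 1 ≤ (l.partsOf b.2.2).parts (b.1 - 1))

/-- The order in which boxes are listed in the `i`-word: increasing charged content,
a component-2 box preceding a component-1 box of equal charged content. -/
def BoxLT (σ : ℤ × ℤ) (b b' : Box) : Prop :=
  content σ b < content σ b' ∨
    (content σ b = content σ b' ∧ b.2.2 = 1 ∧ b'.2.2 = 0)

/-- `L` is the list of boxes underlying the `i`-word of `(l, σ)` with respect to `d`:
it lists, in increasing order, exactly the addable and removable boxes of `l` whose
charged content is congruent to `i` modulo `d`. -/
def IsIWord (l : Bipartition) (σ : ℤ × ℤ) (d : ℕ) (i : ZMod d) (L : List Box) : Prop :=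
  L.Pairwise (BoxLT σ) ∧
    ∀ b : Box, b ∈ L ↔ ((Addable l b ∨ Removable l b) ∧ ((content σ b : ZMod d) = i))

/-- The sign of a box in the `i`-word: `true` (`+`) for addable, `false` (`−`) for
removable boxes. -/
def signOf (l : Bipartition) (b : Box) : Bool := if Addable l b then true else false

/-- One reduction step on words: delete an adjacent pair `−+`. -/
def RedStep (w w' : List Bool) : Prop :=
  ∃ u v : List Bool, w = u ++ false :: true :: v ∧ w' = u ++ v

/-- `ẽ_i l = 0`: the reduced `i`-word of `(l, σ)` contains no `−`, i.e. the `i`-word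
reduces to a word consisting only of `+`'s. -/
def AnnihilatedE (l : Bipartition) (σ : ℤ × ℤ) (d : ℕ) (i : ZMod d) : Prop :=
  ∃ L : List Box, IsIWord l σ d i L ∧
    ∃ a : ℕ, Relation.ReflTransGen RedStep (L.map (signOf l)) (List.replicate a true)

/-- `q` is obtained from the partition `p` by adding one box. -/
def PCovers (p q : SeqPartition) : Prop :=
  ∃ x : ℕ, q.parts x = p.parts x + 1 ∧ ∀ y : ℕ, y ≠ x → q.parts y = p.parts y

/-- `m` is obtained from the bipartition `l` by adding one box to its Young diagram. -/
def BipCovers (l m : Bipartition) : Prop :=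
  (PCovers l.1 m.1 ∧ m.2 = l.2) ∨ (m.1 = l.1 ∧ PCovers l.2 m.2)

/-- `A(l) = Σ_μ μ`, the sum over all bipartitions obtained from `l` by adding one box,
as an element of the group of `ℤ`-valued functions on bipartitions. -/
def addB (l : Bipartition) : Bipartition → ℤ := fun m => if BipCovers l m then 1 else 0

/-- The projection `π_S` onto the span of the bipartitions lying in `S`. -/
def projS (S : Set Bipartition) (f : Bipartition → ℤ) : Bipartition → ℤ :=
  fun m => if m ∈ S then f m else 0

/-- The basis element of `ℤ[BP]` corresponding to a bipartition. -/
def deltaB (l : Bipartition) : Bipartition → ℤ := fun m => if m = l then 1 else 0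

/-- The bipartitions of `2n` labelling the principal-series unipotent characters in
the principal `Φ_{2n}`-block. -/
def PS (n : ℕ) : Set Bipartition :=
  {l | (∃ i j : ℕ, 0 < i ∧ i < n ∧ j ≤ n ∧
          l = bip (hook (n - i) j) (hook (n - j + 1) (i - 1))) ∨
       (∃ j : ℕ, j < 2 * n ∧ l = bip (hook (2 * n - j) j) 0) ∨
       (∃ i : ℕ, 0 < i ∧ i ≤ 2 * n ∧ l = bip 0 (hook (2 * n - i + 1) (i - 1)))}

/-- The bipartitions of `2n-2` labelling the `B₂`-series unipotent characters in the
principal `Φ_{2n}`-block: `2^i 1^{j-i-1} . (n-i-1)(n-j)` for `0 ≤ i < j ≤ n`. -/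
def LB2 (n : ℕ) : Set Bipartition :=
  {l | ∃ i j : ℕ, i < j ∧ j ≤ n ∧
        l = bip (Multiset.replicate i 2 + Multiset.replicate (j - i - 1) 1)
                {n - i - 1, n - j}}

/-- The bipartitions of `2n-6` labelling the `B₆`-series unipotent characters in the
principal `Φ_{2n}`-block: `(n-i-2)(n-j-1) . 2^{i-1} 1^{j-i-1}` for `0 < i < j < n`. -/
def LB6 (n : ℕ) : Set Bipartition :=
  {l | ∃ i j : ℕ, 0 < i ∧ i < j ∧ j < n ∧
        l = bip {n - i - 2, n - j - 1}
                (Multiset.replicate (i - 1) 2 + Multiset.replicate (j - i - 1) 1)}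

end

/-!
Write `λ_k = 2^k1^{n-k-1}.(n-k-2)` and `μ_k = 2^k1^{n-k-1}.(n-k-1)`, the member `i = k`, `j = n`
of `L_{B₂}(n)`. An element of `L_{B₂}(n)` obtained from `λ_k` by adding a box agrees with `λ_k` in
one component, and that component alone forces it to be `μ_k` (box in the second component) or
`μ_{k+1}` (box in the first). So `π_S A(λ_k) = μ_k + μ_{k+1}`, and the alternating sum telescopes
to `(-1)^n μ_0 + μ_{n-1}`.
-/

namespace SeqPartition

@[ext] lemma ext {p q : SeqPartition} (h : p.parts = q.parts) : p = q := by
  cases p; cases q; simp_all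

lemma ofMul_coe_parts {L : List ℕ} (hL : L.Pairwise (· ≥ ·)) (k : ℕ) :
    (ofMul L).parts k = L.getD k 0 := by
  have hsort : (L : Multiset ℕ).sort (· ≤ ·) = L.reverse := by
    rw [← Multiset.coe_reverse, Multiset.coe_sort]
    exact List.mergeSort_eq_self _ (List.pairwise_reverse.mpr hL)
  simp [ofMul, hsort]

lemma ofMul_cons_zero (m : Multiset ℕ) : ofMul (0 ::ₘ m) = ofMul m := by
  set L := (m.sort (· ≤ ·)).reverse
  have hL : L.Pairwise (· ≥ ·) :=
    List.pairwise_reverse.mpr (Multiset.pairwise_sort (r := (· ≤ ·)) m)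
  have hm : ((L ++ [0] : List ℕ) : Multiset ℕ) = 0 ::ₘ m := by
    rw [← Multiset.coe_add, Multiset.coe_reverse, Multiset.sort_eq, add_comm]; rfl
  ext k
  rw [← hm, ofMul_coe_parts (List.pairwise_append.mpr ⟨hL, by simp, by simp⟩)]
  show _ = L.getD k 0
  rcases lt_or_ge k L.length with hk | hk
  · rw [List.getD_append _ _ _ _ hk]
  · rw [List.getD_append_right _ _ _ _ hk, List.getD_eq_default _ _ hk]
    cases k - L.length <;> rfl

lemma ofMul_pair_zero (a : ℕ) : ofMul {a, 0} = ofMul {a} := by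
  show ofMul (a ::ₘ 0 ::ₘ 0) = ofMul (a ::ₘ 0)
  rw [Multiset.cons_swap, ofMul_cons_zero]

lemma ofMul_singleton_parts (a k : ℕ) : (ofMul {a}).parts k = [a].getD k 0 :=
  ofMul_coe_parts (by simp) k

lemma ofMul_pair_parts {a b : ℕ} (hba : b ≤ a) (k : ℕ) :
    (ofMul {a, b}).parts k = [a, b].getD k 0 :=
  ofMul_coe_parts (by simpa using hba) k

lemma ofMul_twos_add_ones_parts (a b k : ℕ) :
    (ofMul (Multiset.replicate a 2 + Multiset.replicate b 1)).parts k =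
      if k < a then 2 else if k < a + b then 1 else 0 := by
  have hL : (List.replicate a 2 ++ List.replicate b 1).Pairwise (· ≥ ·) := by
    simp +contextual [List.pairwise_append, List.pairwise_replicate]
  rw [← Multiset.coe_replicate, ← Multiset.coe_replicate, Multiset.coe_add, ofMul_coe_parts hL]
  simp only [List.getD_eq_getElem?_getD, List.getElem?_append, List.length_replicate,
    List.getElem?_replicate]
  split_ifs <;> first | omega | rfl

lemma ofMul_twos_add_ones_inj {a b a' b' : ℕ}
    (h : ofMul (Multiset.replicate a 2 + Multiset.replicate b 1) =
      ofMul (Multiset.replicate a' 2 + Multiset.replicate b' 1)) : a = a' ∧ b = b' := by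
  have hk (k : ℕ) := congrArg (fun p => p.parts k) h
  simp only [ofMul_twos_add_ones_parts] at hk
  obtain rfl : a = a' := by
    have h₁ := hk a; have h₂ := hk a'
    split_ifs at h₁ h₂ <;> omega
  have h₁ := hk (a + b); have h₂ := hk (a + b')
  exact ⟨rfl, by split_ifs at h₁ h₂ <;> omega⟩

lemma pcovers_ofMul_singleton (a : ℕ) : PCovers (ofMul {a}) (ofMul {a + 1}) := by
  refine ⟨0, by simp [ofMul_singleton_parts], fun y hy => ?_⟩
  obtain ⟨y, rfl⟩ := Nat.exists_eq_succ_of_ne_zero hy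
  simp [ofMul_singleton_parts]

lemma pcovers_ofMul_twos_add_ones (a b : ℕ) :
    PCovers (ofMul (Multiset.replicate a 2 + Multiset.replicate (b + 1) 1))
      (ofMul (Multiset.replicate (a + 1) 2 + Multiset.replicate b 1)) := by
  refine ⟨a, ?_, fun y hy => ?_⟩ <;> simp only [ofMul_twos_add_ones_parts] <;> split_ifs <;> omega

end SeqPartition

open SeqPartition

lemma projS_smul (S : Set Bipartition) (c : ℤ) (f : Bipartition → ℤ) :
    projS S (c • f) = c • projS S f :=
  Set.indicator_const_smul S c f

lemma projS_sum {ι : Type*} (S : Set Bipartition) (s : Finset ι) (f : ι → Bipartition → ℤ) :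
    projS S (∑ i ∈ s, f i) = ∑ i ∈ s, projS S (f i) :=
  Finset.indicator_sum s S f

section LB2

variable {n : ℕ}

def lb2 (n i j : ℕ) : Bipartition :=
  bip (Multiset.replicate i 2 + Multiset.replicate (j - i - 1) 1) {n - i - 1, n - j}

lemma lb2_mem_LB2 {i j : ℕ} (hij : i < j) (hjn : j ≤ n) : lb2 n i j ∈ LB2 n :=
  ⟨i, j, hij, hjn, rfl⟩

lemma lb2_right_eq (n k : ℕ) :
    lb2 n k n = bip (Multiset.replicate k 2 + Multiset.replicate (n - k - 1) 1) {n - k - 1} := by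
  rw [lb2, bip, bip, Nat.sub_self, ofMul_pair_zero]

lemma lb2_ne_lb2_succ (n k : ℕ) : lb2 n k n ≠ lb2 n (k + 1) n := fun h =>
  absurd (ofMul_twos_add_ones_inj (congrArg Prod.fst h)).1 k.succ_ne_self.symm

lemma bipCovers_iff_of_mem_LB2 {k : ℕ} (hk : k < n - 1) {m : Bipartition} (hm : m ∈ LB2 n) :
    BipCovers (bip (Multiset.replicate k 2 + Multiset.replicate (n - k - 1) 1) {n - k - 2}) m ↔
      m = lb2 n k n ∨ m = lb2 n (k + 1) n := by
  obtain ⟨i, j, hij, hjn, rfl⟩ := hm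
  constructor
  · rintro (⟨-, h₂⟩ | ⟨h₁, -⟩)
    · have hp (r : ℕ) : (ofMul {n - i - 1, n - j}).parts r = (ofMul {n - k - 2}).parts r :=
        congrArg (·.parts r) h₂
      have h₀ := hp 0; have h₁ := hp 1
      simp only [ofMul_pair_parts (show n - j ≤ n - i - 1 by omega), ofMul_singleton_parts,
        List.getD_cons_zero, List.getD_cons_succ, List.getD_nil] at h₀ h₁
      obtain rfl : j = n := by omega
      obtain rfl : i = k + 1 := by omega
      exact Or.inr rfl
    · obtain ⟨rfl, h⟩ := ofMul_twos_add_ones_inj h₁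
      obtain rfl : j = n := by omega
      exact Or.inl rfl
  · rintro (h | h) <;> rw [h, lb2_right_eq]
    · refine Or.inr ⟨rfl, ?_⟩
      rw [show n - k - 1 = n - k - 2 + 1 by omega]
      exact pcovers_ofMul_singleton _
    · refine Or.inl ⟨?_, by rw [show n - (k + 1) - 1 = n - k - 2 by omega]; rfl⟩
      rw [show n - k - 1 = n - k - 2 + 1 by omega, show n - (k + 1) - 1 = n - k - 2 by omega]
      exact pcovers_ofMul_twos_add_ones _ _

lemma projS_LB2_addB {k : ℕ} (hk : k < n - 1) :
    projS (LB2 n) (addB (bip (Multiset.replicate k 2 + Multiset.replicate (n - k - 1) 1)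
      {n - k - 2})) = deltaB (lb2 n k n) + deltaB (lb2 n (k + 1) n) := by
  funext m
  have hne := lb2_ne_lb2_succ n k
  simp only [projS, addB, deltaB, Pi.add_apply]
  by_cases hm : m ∈ LB2 n
  · rw [if_pos hm, bipCovers_iff_of_mem_LB2 hk hm]
    split_ifs <;> simp_all
  · have h₁ : m ≠ lb2 n k n := fun h => hm (h ▸ lb2_mem_LB2 (by omega) le_rfl)
    have h₂ : m ≠ lb2 n (k + 1) n := fun h => hm (h ▸ lb2_mem_LB2 (by omega) le_rfl)
    simp [hm, h₁, h₂]

lemma lb2_zero_right (n : ℕ) : lb2 n 0 n = bip (Multiset.replicate (n - 1) 1) {n - 1} := by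
  simp [lb2_right_eq]

lemma lb2_pred_right (hn : 1 ≤ n) : lb2 n (n - 1) n = bip (Multiset.replicate (n - 1) 2) 0 := by
  rw [lb2_right_eq, show n - (n - 1) - 1 = 0 by omega, Multiset.replicate_zero, add_zero, bip, bip,
    ← ofMul_cons_zero 0]
  rfl

end LB2

/-- `π_S(Σ_{k=0}^{n-2} (-1)^{k+n} A(2^k1^{n-k-1}.(n-k-2)))
  = (-1)^n 1^{n-1}.(n-1) + 2^{n-1}.∅` for `S = L_{B₂}(n)`. -/
theorem decomposition_numbers_stmt14 (n : ℕ) (hn : 2 ≤ n) :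
    projS (LB2 n)
        (∑ k ∈ Finset.range (n - 1),
          ((-1 : ℤ) ^ (k + n)) •
            addB (bip (Multiset.replicate k 2 + Multiset.replicate (n - k - 1) 1)
              {n - k - 2}))
      = ((-1 : ℤ) ^ n) • deltaB (bip (Multiset.replicate (n - 1) 1) {n - 1})
        + deltaB (bip (Multiset.replicate (n - 1) 2) 0) := by
  let g (k : ℕ) : Bipartition → ℤ := (-1 : ℤ) ^ (k + n) • deltaB (lb2 n k n)
  have hterm : ∀ k ∈ Finset.range (n - 1), projS (LB2 n) ((-1 : ℤ) ^ (k + n) •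
      addB (bip (Multiset.replicate k 2 + Multiset.replicate (n - k - 1) 1) {n - k - 2})) =
        g k - g (k + 1) := fun k hk => by
    rw [projS_smul, projS_LB2_addB (Finset.mem_range.mp hk), smul_add, sub_eq_add_neg]
    simp only [g, ← neg_smul, show (-1 : ℤ) ^ (k + 1 + n) = -(-1) ^ (k + n) by ring, neg_neg]
  have hsign : (-1 : ℤ) ^ (n - 1 + n) = -1 :=
    (show Odd (n - 1 + n) from ⟨n - 1, by omega⟩).neg_one_pow
  rw [projS_sum, Finset.sum_congr rfl hterm, Finset.sum_range_sub']
  simp only [g, zero_add, hsign, neg_one_smul, sub_neg_eq_add, lb2_zero_right,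
    lb2_pred_right (show 1 ≤ n by omega)]
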